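/- arXiv:2010.07280 — 2 statements merged into one kernel-verified Lean document; each statement's English description precedes it below -/
import Mathlib

section
/- With binary additive valuations and common matroid constraints, suppose in a social-welfare-maximizing allocation X agent i envies j by more than one item (v_i(X_j) − v_i(X_i) ≥ 2), and let X' result from a smart swap exchanging g_i ∈ X_i (worth 0 to both) with g_j ∈ X_j (worth 1 to both). Then: X' is still welfare-maximizing, i's positive envy toward j decreases by exactly 2, v_i(X'_j) ≥ v_i(X'_i), and j has no positive envy toward i in X'. -/
/-- Positive envy of agent `i` toward `j` in allocation `X` (as an integer). -/
noncomputable def posEnvy {α : Type*} [DecidableEq α] {n : ℕ}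
    (v : Fin n → α → ℕ) (X : Fin n → Finset α) (i j : Fin n) : ℤ :=
  max 0 ((((X j).sum (v i) : ℕ) : ℤ) - (((X i).sum (v i) : ℕ) : ℤ))

private lemma sum_pair_split {n : ℕ} (i j : Fin n) (hij : i ≠ j) (f : Fin n → ℕ) :
    ∑ t, f t = f i + f j + ∑ t ∈ (Finset.univ.erase i).erase j, f t := by
  rw [← Finset.add_sum_erase _ f (Finset.mem_univ i),
      ← Finset.add_sum_erase _ f
        (Finset.mem_erase.mpr ⟨hij.symm, Finset.mem_univ j⟩), ← add_assoc]

/-- Smart swap: with binary valuations and common matroid constraints, if in a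
welfare-maximizing allocation agent `i` envies `j` by at least two items, then after
swapping an item `gi ∈ X i` worth 0 to both agents with an item `gj ∈ X j` worth 1 to
both agents (the swap keeping both bundles independent), the resulting allocation is
still welfare-maximizing, `i`'s positive envy toward `j` drops by exactly 2,
`i` still weakly prefers `j`'s new bundle, and `j` has no positive envy toward `i`. -/
theorem stmt16 {α : Type*} [DecidableEq α] {n : ℕ}
    (M : Finset α) (Indep : Finset α → Prop) (v : Fin n → α → ℕ)
    (hbin : ∀ i g, v i g ≤ 1)
    (X : Fin n → Finset α)
    (hdisj : ∀ i j, i ≠ j → Disjoint (X i) (X j))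
    (hcomp : Finset.univ.biUnion X = M)
    (hfeas : ∀ i, Indep (X i))
    (hswm : ∀ X' : Fin n → Finset α,
      (∀ i j, i ≠ j → Disjoint (X' i) (X' j)) →
      Finset.univ.biUnion X' = M →
      (∀ i, Indep (X' i)) →
      (∑ t, (X' t).sum (v t)) ≤ ∑ t, (X t).sum (v t))
    (i j : Fin n) (hij : i ≠ j)
    (gi gj : α) (hgi : gi ∈ X i) (hgj : gj ∈ X j)
    (hv1 : v i gi = 0) (hv2 : v j gi = 0) (hv3 : v i gj = 1) (hv4 : v j gj = 1)
    (henvy : (X i).sum (v i) + 2 ≤ (X j).sum (v i))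
    (hIi : Indep (insert gj ((X i).erase gi)))
    (hIj : Indep (insert gi ((X j).erase gj)))
    (X' : Fin n → Finset α)
    (hX' : X' = fun t => if t = i then insert gj ((X i).erase gi)
                 else if t = j then insert gi ((X j).erase gj) else X t) :
    (∀ X'' : Fin n → Finset α,
      (∀ a b, a ≠ b → Disjoint (X'' a) (X'' b)) →
      Finset.univ.biUnion X'' = M →
      (∀ a, Indep (X'' a)) →
      (∑ t, (X'' t).sum (v t)) ≤ ∑ t, (X' t).sum (v t)) ∧
    posEnvy v X' i j = posEnvy v X i j - 2 ∧
    (X' i).sum (v i) ≤ (X' j).sum (v i) ∧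
    posEnvy v X' j i = 0 := by
  have hgjXi : gj ∉ X i := fun h => Finset.disjoint_left.mp (hdisj i j hij) h hgj
  have hgiXj : gi ∉ X j := Finset.disjoint_left.mp (hdisj i j hij) hgi
  have hXi' : X' i = insert gj ((X i).erase gi) := by rw [hX']; simp
  have hXj' : X' j = insert gi ((X j).erase gj) := by
    rw [hX']; simp [hij.symm]
  have hXt' : ∀ t, t ≠ i → t ≠ j → X' t = X t := by
    intro t h1 h2; rw [hX']; simp [h1, h2]
  have hgjnot : gj ∉ (X i).erase gi := fun h => hgjXi (Finset.mem_of_mem_erase h)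
  have hginot : gi ∉ (X j).erase gj := fun h => hgiXj (Finset.mem_of_mem_erase h)
  have hsumi : ∀ w : α → ℕ, (X' i).sum w + w gi = (X i).sum w + w gj := by
    intro w
    rw [hXi', Finset.sum_insert hgjnot]
    have h2 : w gi + ((X i).erase gi).sum w = (X i).sum w :=
      Finset.add_sum_erase (X i) w hgi
    have h3 : (∑ x ∈ (X i).erase gi, w x) = ((X i).erase gi).sum w := rfl
    omega
  have hsumj : ∀ w : α → ℕ, (X' j).sum w + w gj = (X j).sum w + w gi := by
    intro w
    rw [hXj', Finset.sum_insert hginot]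
    have h2 : w gj + ((X j).erase gj).sum w = (X j).sum w :=
      Finset.add_sum_erase (X j) w hgj
    have h3 : (∑ x ∈ (X j).erase gj, w x) = ((X j).erase gj).sum w := rfl
    omega
  have e1 : (X' i).sum (v i) = (X i).sum (v i) + 1 := by
    have := hsumi (v i); rw [hv1, hv3] at this; omega
  have e2 : (X' j).sum (v i) + 1 = (X j).sum (v i) := by
    have := hsumj (v i); rw [hv1, hv3] at this; omega
  have e3 : (X' i).sum (v j) = (X i).sum (v j) + 1 := by
    have := hsumi (v j); rw [hv2, hv4] at this; omega
  have e4 : (X' j).sum (v j) + 1 = (X j).sum (v j) := by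
    have := hsumj (v j); rw [hv2, hv4] at this; omega
  have hrest : ∑ t ∈ (Finset.univ.erase i).erase j, (X' t).sum (v t)
      = ∑ t ∈ (Finset.univ.erase i).erase j, (X t).sum (v t) := by
    refine Finset.sum_congr rfl ?_
    intro t ht
    rw [Finset.mem_erase, Finset.mem_erase] at ht
    rw [hXt' t ht.2.1 ht.1]
  have hwel : ∑ t, (X' t).sum (v t) = ∑ t, (X t).sum (v t) := by
    rw [sum_pair_split i j hij (fun t => (X' t).sum (v t)),
        sum_pair_split i j hij (fun t => (X t).sum (v t))]
    omega
  -- SWM applied to the bundle-swapped allocation gives v_j(X i) + 2 ≤ v_j(X j)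
  have key : (X i).sum (v j) + 2 ≤ (X j).sum (v j) := by
    set Y : Fin n → Finset α := fun t => X (Equiv.swap i j t) with hY
    have hYd : ∀ a b, a ≠ b → Disjoint (Y a) (Y b) := fun a b hab =>
      hdisj _ _ (fun h => hab ((Equiv.swap i j).injective h))
    have hYu : Finset.univ.biUnion Y = M := by
      rw [← hcomp]
      ext x
      simp only [Finset.mem_biUnion, Finset.mem_univ, true_and, hY]
      constructor
      · rintro ⟨t, ht⟩; exact ⟨_, ht⟩
      · rintro ⟨t, ht⟩
        exact ⟨Equiv.swap i j t, by simpa using ht⟩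
    have hYle := hswm Y hYd hYu (fun t => hfeas _)
    have hYi : Y i = X j := by simp [hY]
    have hYj : Y j = X i := by simp [hY]
    have hYrest : ∑ t ∈ (Finset.univ.erase i).erase j, (Y t).sum (v t)
        = ∑ t ∈ (Finset.univ.erase i).erase j, (X t).sum (v t) := by
      refine Finset.sum_congr rfl ?_
      intro t ht
      rw [Finset.mem_erase, Finset.mem_erase] at ht
      rw [hY]
      simp only
      rw [Equiv.swap_apply_of_ne_of_ne ht.2.1 ht.1]
    rw [sum_pair_split i j hij (fun t => (Y t).sum (v t)),
        sum_pair_split i j hij (fun t => (X t).sum (v t))] at hYle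
    simp only [hYi, hYj] at hYle
    have r1 : (∑ x ∈ X j, v i x) = (X j).sum (v i) := rfl
    have r2 : (∑ x ∈ X i, v j x) = (X i).sum (v j) := rfl
    have r3 : (∑ x ∈ X i, v i x) = (X i).sum (v i) := rfl
    have r4 : (∑ x ∈ X j, v j x) = (X j).sum (v j) := rfl
    omega
  refine ⟨?_, ?_, ?_, ?_⟩
  · intro X'' h1 h2 h3
    rw [hwel]
    exact hswm X'' h1 h2 h3
  · unfold posEnvy
    rw [max_eq_right (by omega : (0:ℤ) ≤ (((X' j).sum (v i) : ℕ) : ℤ) - (((X' i).sum (v i) : ℕ) : ℤ)),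
        max_eq_right (by omega : (0:ℤ) ≤ (((X j).sum (v i) : ℕ) : ℤ) - (((X i).sum (v i) : ℕ) : ℤ))]
    omega
  · omega
  · unfold posEnvy
    rw [max_eq_left]
    omega
end

section
/- There exists an instance with two agents having partition-matroid constraints with different category partitions and identical binary valuations, in which the unique complete feasible allocation fails F-EF1. -/
open Classical in
noncomputable def pmFeasVal {α : Type*} [DecidableEq α] (v : α → ℕ)
    (Feas : Finset α → Prop) (T : Finset α) : ℕ :=
  ((T.powerset.filter Feas).image (fun S => S.sum v)).sup id

open Classical in
lemma pmFeasVal_ge {α : Type*} [DecidableEq α] (v : α → ℕ) (Feas : Finset α → Prop)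
    (T S : Finset α) (hS : S ⊆ T) (hF : Feas S) : S.sum v ≤ pmFeasVal v Feas T := by
  apply Finset.le_sup (f := id)
  simp only [Finset.mem_image, Finset.mem_filter, Finset.mem_powerset]
  exact ⟨S, ⟨hS, hF⟩, rfl⟩

/-- An instance with two agents, identical binary valuations, and partition-matroid
constraints with *different* category partitions (items `a=0, b=1, c=2, d=3`;
Alice: categories `{a,c}`, `{b,d}` each with capacity 1; Bob: categories `{a}`, `{b}`
with capacity 1 and `{c,d}` with capacity 0) in which the unique complete feasible
allocation gives `{c,d}` to Alice and `{a,b}` to Bob and fails F-EF1. -/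
theorem stmt18 :
    ∀ XA XB : Finset (Fin 4), Disjoint XA XB → XA ∪ XB = Finset.univ →
      ((XA ∩ {0, 2}).card ≤ 1 ∧ (XA ∩ {1, 3}).card ≤ 1) →
      ((XB ∩ {0}).card ≤ 1 ∧ (XB ∩ {1}).card ≤ 1 ∧ (XB ∩ {2, 3}).card ≤ 0) →
      (XA = {2, 3} ∧ XB = {0, 1}) ∧
      ¬ ∃ Y ⊆ XB, Y.card ≤ 1 ∧
        pmFeasVal (![1, 1, 0, 0])
          (fun S => (S ∩ {0, 2}).card ≤ 1 ∧ (S ∩ {1, 3}).card ≤ 1) (XB \ Y)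
          ≤ XA.sum (![1, 1, 0, 0]) := by
  intro XA XB hdis huni hA hB
  -- From Bob's third constraint, 2,3 ∉ XB
  have hB3 : XB ∩ {2, 3} = ∅ := Finset.card_eq_zero.mp (Nat.le_zero.mp hB.2.2)
  have h2B : (2 : Fin 4) ∉ XB := by
    intro h
    exact Finset.eq_empty_iff_forall_notMem.mp hB3 2 (Finset.mem_inter.mpr ⟨h, by decide⟩)
  have h3B : (3 : Fin 4) ∉ XB := by
    intro h
    exact Finset.eq_empty_iff_forall_notMem.mp hB3 3 (Finset.mem_inter.mpr ⟨h, by decide⟩)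
  have hmem : ∀ x : Fin 4, x ∈ XA ∨ x ∈ XB := by
    intro x
    have := huni ▸ Finset.mem_univ x
    exact Finset.mem_union.mp this
  have h2A : (2 : Fin 4) ∈ XA := (hmem 2).resolve_right h2B
  have h3A : (3 : Fin 4) ∈ XA := (hmem 3).resolve_right h3B
  have h0A : (0 : Fin 4) ∉ XA := by
    intro h
    have : ({0, 2} : Finset (Fin 4)) ⊆ XA ∩ {0, 2} := by
      intro x hx
      fin_cases hx <;> exact Finset.mem_inter.mpr ⟨by assumption, by decide⟩
    have := (Finset.card_le_card this).trans hA.1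
    simp at this
  have h1A : (1 : Fin 4) ∉ XA := by
    intro h
    have : ({1, 3} : Finset (Fin 4)) ⊆ XA ∩ {1, 3} := by
      intro x hx
      fin_cases hx <;> exact Finset.mem_inter.mpr ⟨by assumption, by decide⟩
    have := (Finset.card_le_card this).trans hA.2
    simp at this
  have h0B : (0 : Fin 4) ∈ XB := (hmem 0).resolve_left h0A
  have h1B : (1 : Fin 4) ∈ XB := (hmem 1).resolve_left h1A
  have h0nA := h0A
  have h2nB := h2B
  have hXA : XA = {2, 3} := by
    ext x
    fin_cases x <;>
      simp_all [Finset.disjoint_left.mp hdis h2A, Finset.disjoint_left.mp hdis h3A]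
  have hXB : XB = {0, 1} := by
    ext x
    fin_cases x <;> simp_all
  refine ⟨⟨hXA, hXB⟩, ?_⟩
  rintro ⟨Y, hYsub, hYcard, hle⟩
  -- XB \ Y contains 0 or 1
  have hXAsum : XA.sum (![1, 1, 0, 0]) = 0 := by subst hXA; decide
  rw [hXAsum] at hle
  have hg : (0 : Fin 4) ∈ XB \ Y ∨ (1 : Fin 4) ∈ XB \ Y := by
    by_contra h
    push_neg at h
    have h0 : (0 : Fin 4) ∈ Y := by
      rcases Finset.mem_sdiff.not.mp h.1 with h'
      simp [h0B] at h'; exact h'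
    have h1 : (1 : Fin 4) ∈ Y := by
      rcases Finset.mem_sdiff.not.mp h.2 with h'
      simp [h1B] at h'; exact h'
    have : ({0, 1} : Finset (Fin 4)) ⊆ Y := by
      intro x hx; fin_cases hx <;> assumption
    have := (Finset.card_le_card this).trans hYcard
    simp at this
  rcases hg with hg | hg
  · have := pmFeasVal_ge (![1, 1, 0, 0])
      (fun S => (S ∩ ({0, 2} : Finset (Fin 4))).card ≤ 1 ∧ (S ∩ {1, 3}).card ≤ 1)
      (XB \ Y) {0} (by simpa using hg) (by decide)
    rw [Finset.sum_singleton] at this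
    exact Nat.not_succ_le_zero 0 ((by simpa using this : 1 ≤ _).trans hle)
  · have := pmFeasVal_ge (![1, 1, 0, 0])
      (fun S => (S ∩ ({0, 2} : Finset (Fin 4))).card ≤ 1 ∧ (S ∩ {1, 3}).card ≤ 1)
      (XB \ Y) {1} (by simpa using hg) (by decide)
    rw [Finset.sum_singleton] at this
    exact Nat.not_succ_le_zero 0 ((by simpa using this : 1 ≤ _).trans hle)
end
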